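/- Hardy's Theorem (concrete form). Let d ≥ 3 and let ψ, φ ∈ EuclideanSpace ℂ (Fin d) be unit vectors with ⟪φ, ψ⟫ ≠ 0 and ‖⟪φ, ψ⟫‖² ≤ (d−1)/d. Let μ_ψ and μ_φ be probability measures on a measurable space (Λ, Σ). Suppose that for every family of unitary operators (U_j)_{j ∈ Fin d} on EuclideanSpace ℂ (Fin d) with U_j ψ = ψ for every j, there exist Markov kernels (γ_j)_{j ∈ Fin d} from (Λ, Σ) to itself such that: (a) (ontic indifference for ψ) for each j there is a measurable set Ω_j with μ_ψ(Ω_j) = 1 and γ_j(λ)(Ω') = δ_λ(Ω') for every λ ∈ Ω_j and every measurable Ω' ⊆ Ω_j; and (b) (reproduces the quantum preclusions) for every orthonormal basis (b_i)_{i ∈ Fin d} there exist measurable functions f_i : Λ → ℝ with f_i ≥ 0, Σ_{i ∈ Fin d} f_i(λ) = 1 for every λ, and ∫ f_i d(μ_φ bind γ_j) = 0 whenever ⟪b_i, U_j φ⟫ = 0. Then D(μ_ψ, μ_φ) = 1, i.e. ψ and φ are ontologically distinct. -/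

import Mathlib

/-!
Choose an orthonormal basis `b` with `‖⟪bᵢ, ψ⟫‖² = 1/d` and write `φ = a • ψ + η` with `η ⊥ ψ`.
The bound `‖a‖² ≤ (d - 1)/d` is exactly what is needed to find, for every `i`, a vector `qᵢ ⊥ ψ`
with `‖qᵢ‖ = ‖η‖` and `⟪bᵢ, qᵢ⟫ = -a ⟪bᵢ, ψ⟫` (here `d ≥ 3` leaves room for a direction orthogonal
to both `ψ` and `bᵢ`), and then a unitary `Uᵢ` fixing `ψ` with `Uᵢ η = qᵢ`, so that outcome `i` of
the measurement in `b` is precluded on `Uᵢ φ`.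

On the set `Ω = ⋂ Ωⱼ`, which carries `μψ`, every kernel acts as the identity, so `μφ` restricted
to `Ω` is dominated by each `μφ.bind γᵢ`. Hence the response function `fᵢ` vanishes `μφ`-a.e. on
`Ω`; as the `fᵢ` sum to one, `μφ Ω = 0`, while `μψ Ω = 1`.
-/

open MeasureTheory ProbabilityTheory

noncomputable def varDist {Λ : Type*} [MeasurableSpace Λ] (μ ν : Measure Λ) : ℝ :=
  ⨆ Ω : {s : Set Λ // MeasurableSet s}, |(μ Ω.1).toReal - (ν Ω.1).toReal|

section InnerProductSpace

open Module

variable {𝕜 E : Type*} [RCLike 𝕜] [NormedAddCommGroup E] [InnerProductSpace 𝕜 E]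

local notation "⟪" x ", " y "⟫" => inner 𝕜 x y

theorem exists_linearIsometryEquiv_eqOn [FiniteDimensional 𝕜 E] {ι : Type*} [Fintype ι]
    (hι : finrank 𝕜 E = Fintype.card ι) {s : Set ι} {v w : ι → E}
    (hv : Orthonormal 𝕜 (s.domRestrict v)) (hw : Orthonormal 𝕜 (s.domRestrict w)) :
    ∃ U : E ≃ₗᵢ[𝕜] E, ∀ i ∈ s, U (v i) = w i := by
  classical
  obtain ⟨B, hB⟩ := hv.exists_orthonormalBasis_extension_of_card_eq hι
  obtain ⟨B', hB'⟩ := hw.exists_orthonormalBasis_extension_of_card_eq hι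
  refine ⟨B.repr.trans B'.repr.symm, fun i hi => ?_⟩
  rw [← hB i hi, ← hB' i hi, LinearIsometryEquiv.trans_apply, B.repr_self, B'.repr_symm_single]

theorem exists_linearIsometryEquiv_apply_eq [FiniteDimensional 𝕜 E] {x y : E} (hx : ‖x‖ = 1)
    (hy : ‖y‖ = 1) : ∃ U : E ≃ₗᵢ[𝕜] E, U x = y := by
  have hE : 0 < finrank 𝕜 E :=
    finrank_pos_iff_exists_ne_zero.2 ⟨x, norm_ne_zero_iff.1 (by simp [hx])⟩
  obtain ⟨U, hU⟩ := exists_linearIsometryEquiv_eqOn (Fintype.card_fin _).symm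
    (s := {⟨0, hE⟩}) (v := fun _ => x) (w := fun _ => y) (by simp [Set.domRestrict, hx])
    (by simp [Set.domRestrict, hy])
  exact ⟨U, hU _ rfl⟩

theorem exists_linearIsometryEquiv_fixing_apply_eq_of_norm_eq_one [FiniteDimensional 𝕜 E]
    (hE : 2 ≤ finrank 𝕜 E) {x y y' : E} (hx : ‖x‖ = 1) (hy : ‖y‖ = 1) (hy' : ‖y'‖ = 1)
    (hxy : ⟪x, y⟫ = 0) (hxy' : ⟪x, y'⟫ = 0) :
    ∃ U : E ≃ₗᵢ[𝕜] E, U x = x ∧ U y = y' := by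
  obtain ⟨i, j, hij⟩ : ∃ i j : Fin (finrank 𝕜 E), i ≠ j :=
    ⟨⟨0, by omega⟩, ⟨1, by omega⟩, Fin.ne_of_val_ne zero_ne_one⟩
  have pair (z : E) (hz : ‖z‖ = 1) (hxz : ⟪x, z⟫ = 0) :
      Orthonormal 𝕜 (({i, j} : Set _).domRestrict fun k => if k = i then x else z) := by
    rw [orthonormal_iff_ite]
    rintro ⟨k, rfl | rfl⟩ ⟨l, rfl | rfl⟩ <;>
      simp [Set.domRestrict, Subtype.ext_iff, hij, hij.symm, hx, hz, hxz,
        inner_eq_zero_symm.1 hxz]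
  obtain ⟨U, hU⟩ := exists_linearIsometryEquiv_eqOn (Fintype.card_fin _).symm
    (pair y hy hxy) (pair y' hy' hxy')
  exact ⟨U, by simpa using hU i (by simp), by simpa [hij.symm] using hU j (by simp)⟩

theorem exists_linearIsometryEquiv_fixing_apply_eq [FiniteDimensional 𝕜 E]
    (hE : 2 ≤ finrank 𝕜 E) {x y y' : E} (hx : ‖x‖ = 1) (hxy : ⟪x, y⟫ = 0) (hxy' : ⟪x, y'⟫ = 0)
    (hyy' : ‖y‖ = ‖y'‖) :
    ∃ U : E ≃ₗᵢ[𝕜] E, U x = x ∧ U y = y' := by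
  rcases eq_or_ne y 0 with rfl | hy
  · exact ⟨LinearIsometryEquiv.refl 𝕜 E, rfl, by simpa [eq_comm] using hyy'⟩
  have hr : (‖y‖ : 𝕜) ≠ 0 := by simpa using hy
  obtain ⟨U, hUx, hUy⟩ := exists_linearIsometryEquiv_fixing_apply_eq_of_norm_eq_one
    (y := (‖y‖⁻¹ : 𝕜) • y) (y' := (‖y‖⁻¹ : 𝕜) • y') hE hx (by simp [norm_smul, hy])
    (by simp [norm_smul, ← hyy', hy]) (by simp [inner_smul_right, hxy])
    (by simp [inner_smul_right, hxy'])
  refine ⟨U, hUx, ?_⟩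
  rw [map_smul, smul_right_injective E (inv_ne_zero hr) |>.eq_iff] at hUy
  exact hUy

theorem exists_norm_eq_one_forall_inner_eq_zero [FiniteDimensional 𝕜 E] {ι : Type*} [Fintype ι]
    (x : ι → E) (h : Fintype.card ι < finrank 𝕜 E) : ∃ v : E, ‖v‖ = 1 ∧ ∀ i, ⟪x i, v⟫ = 0 := by
  set K := Submodule.span 𝕜 (Set.range x)
  have hK : Kᗮ ≠ ⊥ := by
    rw [Ne, Submodule.orthogonal_eq_bot_iff]
    intro hK
    exact (finrank_le_of_span_eq_top hK).not_gt h
  obtain ⟨w, hw, hw0⟩ := Submodule.exists_mem_ne_zero_of_ne_bot hK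
  refine ⟨(‖w‖⁻¹ : 𝕜) • w, by simp [norm_smul, hw0], fun i => ?_⟩
  rw [inner_smul_right, Submodule.inner_right_of_mem_orthogonal
    (Submodule.subset_span (Set.mem_range_self i)) hw, mul_zero]

theorem exists_mem_span_pair_norm_eq_inner_eq {p v : E} (hv : ‖v‖ = 1) (hpv : ⟪p, v⟫ = 0)
    {r : ℝ} (hr : 0 ≤ r) {t : 𝕜} (ht : ‖t‖ ≤ r * ‖p‖) :
    ∃ q ∈ Submodule.span 𝕜 {p, v}, ‖q‖ = r ∧ ⟪p, q⟫ = t := by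
  rcases eq_or_ne p 0 with rfl | hp
  · refine ⟨(r : 𝕜) • v, Submodule.smul_mem _ _ (Submodule.subset_span (by simp)), ?_, ?_⟩
    · simp [norm_smul, hv, hr]
    · simpa using (norm_le_zero_iff.1 (by simpa using ht)).symm
  have hp2 : (0 : ℝ) < ‖p‖ ^ 2 := by positivity
  set β : ℝ := √(r ^ 2 - ‖t‖ ^ 2 / ‖p‖ ^ 2)
  have hβ : β ^ 2 = r ^ 2 - ‖t‖ ^ 2 / ‖p‖ ^ 2 := by
    refine Real.sq_sqrt (sub_nonneg.2 ?_)
    rw [div_le_iff₀ hp2, ← mul_pow]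
    exact pow_le_pow_left₀ (norm_nonneg t) ht 2
  refine ⟨(t / (‖p‖ ^ 2 : ℝ)) • p + (β : 𝕜) • v, Submodule.add_mem _
    (Submodule.smul_mem _ _ (Submodule.subset_span (by simp)))
    (Submodule.smul_mem _ _ (Submodule.subset_span (by simp))), ?_, ?_⟩
  · have horth : ⟪(t / (‖p‖ ^ 2 : ℝ)) • p, (β : 𝕜) • v⟫ = 0 := by
      simp [inner_smul_left, inner_smul_right, hpv]
    rw [← sq_eq_sq₀ (norm_nonneg _) hr, @norm_add_sq 𝕜, horth, norm_smul, norm_smul, norm_div,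
      RCLike.norm_ofReal, RCLike.norm_ofReal, hv, abs_of_pos hp2, mul_one, sq_abs, hβ, map_zero,
      mul_zero, add_zero]
    field_simp
    ring
  · rw [inner_add_right, inner_smul_right, inner_smul_right, hpv, inner_self_eq_norm_sq_to_K,
      mul_zero, add_zero, ← RCLike.ofReal_pow, div_mul_cancel₀]
    exact_mod_cast hp2.ne'

theorem inner_sub_inner_smul_self {ψ : E} (hψ : ‖ψ‖ = 1) (x : E) :
    ⟪ψ, x - ⟪ψ, x⟫ • ψ⟫ = 0 := by
  simp [inner_sub_right, inner_smul_right, inner_self_eq_norm_sq_to_K, hψ]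

theorem norm_sub_inner_smul_self_sq {ψ : E} (hψ : ‖ψ‖ = 1) (x : E) :
    ‖x - ⟪ψ, x⟫ • ψ‖ ^ 2 = ‖x‖ ^ 2 - ‖⟪ψ, x⟫‖ ^ 2 := by
  conv_rhs => rw [← sub_add_cancel x (⟪ψ, x⟫ • ψ)]
  rw [@norm_add_sq 𝕜, inner_smul_right, inner_eq_zero_symm.1 (inner_sub_inner_smul_self hψ x)]
  simp [norm_smul, hψ]

theorem exists_inner_eq_zero_norm_eq_inner_eq [FiniteDimensional 𝕜 E] (hE : 3 ≤ finrank 𝕜 E)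
    {ψ b : E} (hψ : ‖ψ‖ = 1) {r : ℝ} (hr : 0 ≤ r) {t : 𝕜}
    (ht : ‖t‖ ^ 2 ≤ r ^ 2 * (‖b‖ ^ 2 - ‖⟪ψ, b⟫‖ ^ 2)) :
    ∃ q : E, ⟪ψ, q⟫ = 0 ∧ ‖q‖ = r ∧ ⟪b, q⟫ = t := by
  set p := b - ⟪ψ, b⟫ • ψ
  have hψp : ⟪ψ, p⟫ = 0 := inner_sub_inner_smul_self hψ b
  have hbp : b = p + ⟪ψ, b⟫ • ψ := (sub_add_cancel _ _).symm
  obtain ⟨v, hv, hψbv⟩ :=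
    exists_norm_eq_one_forall_inner_eq_zero (𝕜 := 𝕜) ![ψ, b] (by simp; omega)
  have hψv : ⟪ψ, v⟫ = 0 := hψbv 0
  have hbv : ⟪b, v⟫ = 0 := hψbv 1
  have hpv : ⟪p, v⟫ = 0 := by
    simp [p, inner_sub_left, inner_smul_left, hψv, hbv]
  obtain ⟨q, hq, hqr, hpq⟩ := exists_mem_span_pair_norm_eq_inner_eq hv hpv hr (t := t)
    (pow_le_pow_iff_left₀ (norm_nonneg t) (by positivity) two_ne_zero |>.1
      (by rw [mul_pow, norm_sub_inner_smul_self_sq hψ]; exact ht))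
  obtain ⟨α, β, rfl⟩ := Submodule.mem_span_pair.1 hq
  have hψq : ⟪ψ, α • p + β • v⟫ = 0 := by
    simp [inner_add_right, inner_smul_right, hψp, hψv]
  refine ⟨_, hψq, hqr, ?_⟩
  rw [hbp, inner_add_left, inner_smul_left, hψq, mul_zero, add_zero, hpq]

theorem exists_orthonormalBasis_norm_inner_sq_eq [FiniteDimensional 𝕜 E] {d : ℕ}
    (hd : finrank 𝕜 E = d) {ψ : E} (hψ : ‖ψ‖ = 1) :
    ∃ b : OrthonormalBasis (Fin d) 𝕜 E, ∀ i, ‖⟪b i, ψ⟫‖ ^ 2 = (d : ℝ)⁻¹ := by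
  have hd0 : (d : ℝ) ≠ 0 := by
    rw [← hd, Nat.cast_ne_zero, ← Nat.pos_iff_ne_zero, finrank_pos_iff_exists_ne_zero (R := 𝕜)]
    exact ⟨ψ, norm_ne_zero_iff.1 (by simp [hψ])⟩
  set e := (stdOrthonormalBasis 𝕜 E).reindex (finCongr hd)
  set u := e.repr.symm (WithLp.toLp 2 fun _ => (((√d)⁻¹ : ℝ) : 𝕜))
  have hu : ‖u‖ = 1 := by
    rw [LinearIsometryEquiv.norm_map, EuclideanSpace.norm_eq]
    simp [hd0]
  obtain ⟨V, hV⟩ := exists_linearIsometryEquiv_apply_eq (𝕜 := 𝕜) hu hψ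
  refine ⟨e.map V, fun i => ?_⟩
  rw [OrthonormalBasis.map_apply, ← hV, LinearIsometryEquiv.inner_map_map,
    ← OrthonormalBasis.repr_apply_apply]
  simp [u]

theorem exists_linearIsometryEquiv_fixing_orthonormalBasis_inner_eq_zero [FiniteDimensional 𝕜 E]
    {d : ℕ} (hE : finrank 𝕜 E = d) (hd : 3 ≤ d) {ψ φ : E} (hψ : ‖ψ‖ = 1) (hφ : ‖φ‖ = 1)
    (hle : ‖⟪φ, ψ⟫‖ ^ 2 ≤ ((d : ℝ) - 1) / d) :
    ∃ (U : Fin d → E ≃ₗᵢ[𝕜] E) (b : OrthonormalBasis (Fin d) 𝕜 E),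
      (∀ j, U j ψ = ψ) ∧ ∀ i, ⟪b i, U i φ⟫ = 0 := by
  set a := ⟪ψ, φ⟫
  set η := φ - a • ψ
  have hψη : ⟪ψ, η⟫ = 0 := inner_sub_inner_smul_self hψ φ
  have hη : ‖η‖ ^ 2 = 1 - ‖a‖ ^ 2 := by rw [norm_sub_inner_smul_self_sq hψ, hφ, one_pow]
  obtain ⟨b, hb⟩ := exists_orthonormalBasis_norm_inner_sq_eq hE hψ
  have hq : ∀ i, ∃ q : E, ⟪ψ, q⟫ = 0 ∧ ‖q‖ = ‖η‖ ∧ ⟪b i, q⟫ = -(a * ⟪b i, ψ⟫) := by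
    intro i
    refine exists_inner_eq_zero_norm_eq_inner_eq (by omega) hψ (norm_nonneg η) ?_
    have hd0 : (0 : ℝ) < d := by positivity
    rw [norm_neg, norm_mul, mul_pow, hb, hη, b.orthonormal.1 i, norm_inner_symm ψ (b i), hb]
    rw [norm_inner_symm, le_div_iff₀ hd0] at hle
    field_simp
    nlinarith
  choose q hψq hqη hbq using hq
  choose U hUψ hUη using fun i => exists_linearIsometryEquiv_fixing_apply_eq
    (by omega) hψ hψη (hψq i) (hqη i).symm
  refine ⟨U, b, hUψ, fun i => ?_⟩
  rw [show φ = η + a • ψ from (sub_add_cancel _ _).symm, map_add, map_smul, hUη, hUψ,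
    inner_add_right, inner_smul_right, hbq]
  ring

end InnerProductSpace

section Measure

variable {Λ : Type*} [MeasurableSpace Λ]

theorem le_bind_apply_of_forall_mem_eq_one (μ : Measure Λ) {κ : Kernel Λ Λ} {S : Set Λ}
    (hS : MeasurableSet S) (hκ : ∀ l ∈ S, κ l S = 1) : μ S ≤ μ.bind κ S := by
  rw [Measure.bind_apply hS κ.measurable.aemeasurable, ← lintegral_indicator_one hS]
  refine lintegral_mono fun l => ?_
  by_cases hl : l ∈ S
  · simp [hl, hκ l hl]
  · simp [hl]

theorem measure_support_eq_zero_of_integral_eq_zero {ν : Measure Λ} [IsFiniteMeasure ν]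
    {f : Λ → ℝ} (hf : Measurable f) (hf0 : 0 ≤ f) (hf1 : f ≤ 1) (h : ∫ x, f x ∂ν = 0) :
    ν (Function.support f) = 0 :=
  (integral_eq_zero_iff_of_nonneg hf0 (Integrable.of_bound hf.aestronglyMeasurable 1
    (Filter.Eventually.of_forall fun x => by simpa [abs_of_nonneg (hf0 x)] using hf1 x))).1 h

theorem measure_eq_zero_of_sum_eq_one {ι : Type*} [Fintype ι] {μ : Measure Λ}
    {f : ι → Λ → ℝ} (hf : ∀ l, ∑ i, f i l = 1) {Ω : Set Λ}
    (h : ∀ i, μ (Function.support (f i) ∩ Ω) = 0) : μ Ω = 0 := by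
  refine measure_mono_null (fun l hl => ?_) (measure_iUnion_null h)
  obtain ⟨i, -, hi⟩ := Finset.exists_ne_zero_of_sum_ne_zero (by simp [hf l] : ∑ i, f i l ≠ 0)
  exact Set.mem_iUnion.2 ⟨i, hi, hl⟩

theorem measure_support_inter_eq_zero_of_integral_bind_eq_zero {μ : Measure Λ}
    [IsFiniteMeasure μ] {κ : Kernel Λ Λ} [IsMarkovKernel κ] {Ω : Set Λ} (hΩ : MeasurableSet Ω)
    (hκ : ∀ l ∈ Ω, ∀ S ⊆ Ω, MeasurableSet S → κ l S = Measure.dirac l S) {f : Λ → ℝ}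
    (hf : Measurable f) (hf0 : 0 ≤ f) (hf1 : f ≤ 1) (h : ∫ x, f x ∂(μ.bind κ) = 0) :
    μ (Function.support f ∩ Ω) = 0 := by
  have hS : MeasurableSet (Function.support f ∩ Ω) := (measurableSet_support hf).inter hΩ
  refine nonpos_iff_eq_zero.1 ?_
  calc μ (Function.support f ∩ Ω)
      ≤ μ.bind κ (Function.support f ∩ Ω) :=
        le_bind_apply_of_forall_mem_eq_one μ hS fun l hl => by
          rw [hκ l hl.2 _ Set.inter_subset_right hS, Measure.dirac_apply_of_mem hl]
    _ ≤ μ.bind κ (Function.support f) := measure_mono Set.inter_subset_left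
    _ = 0 := measure_support_eq_zero_of_integral_eq_zero hf hf0 hf1 h

theorem varDist_eq_one_of_measure_eq {μ ν : Measure Λ} [IsProbabilityMeasure μ]
    [IsProbabilityMeasure ν] {Ω : Set Λ} (hΩ : MeasurableSet Ω) (hμ : μ Ω = 1) (hν : ν Ω = 0) :
    varDist μ ν = 1 := by
  have hle : ∀ s : {s : Set Λ // MeasurableSet s}, |(μ s.1).toReal - (ν s.1).toReal| ≤ 1 := by
    intro s
    change |μ.real s.1 - ν.real s.1| ≤ 1
    rw [abs_sub_le_iff]
    constructor <;> linarith [measureReal_le_one (μ := μ) (s := s.1),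
      measureReal_le_one (μ := ν) (s := s.1), measureReal_nonneg (μ := μ) (s := s.1),
      measureReal_nonneg (μ := ν) (s := s.1)]
  refine le_antisymm (ciSup_le hle) ?_
  refine le_ciSup_of_le ⟨1, Set.forall_mem_range.2 hle⟩ ⟨Ω, hΩ⟩ ?_
  simp [hμ, hν]

end Measure

theorem stmt14_general {Λ : Type*} [MeasurableSpace Λ] (d : ℕ) (hd : 3 ≤ d)
    (ψ φ : EuclideanSpace ℂ (Fin d)) (hψ : ‖ψ‖ = 1) (hφ : ‖φ‖ = 1)
    (hle : ‖(inner ℂ φ ψ : ℂ)‖ ^ 2 ≤ ((d : ℝ) - 1) / d)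
    (μψ μφ : Measure Λ) [IsProbabilityMeasure μψ] [IsProbabilityMeasure μφ]
    (h : ∀ U : Fin d → (EuclideanSpace ℂ (Fin d) ≃ₗᵢ[ℂ] EuclideanSpace ℂ (Fin d)),
      (∀ j, U j ψ = ψ) →
      ∃ γ : Fin d → Kernel Λ Λ, (∀ j, IsMarkovKernel (γ j)) ∧
        (∀ j, ∃ Ω : Set Λ, MeasurableSet Ω ∧ μψ Ω = 1 ∧
          ∀ l ∈ Ω, ∀ Ω' : Set Λ, Ω' ⊆ Ω → MeasurableSet Ω' →
            γ j l Ω' = Measure.dirac l Ω') ∧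
        (∀ b : OrthonormalBasis (Fin d) ℂ (EuclideanSpace ℂ (Fin d)),
          ∃ f : Fin d → Λ → ℝ,
            (∀ i, Measurable (f i)) ∧ (∀ i l, 0 ≤ f i l) ∧ (∀ l, ∑ i, f i l = 1) ∧
            ∀ i j, (inner ℂ (b i) (U j φ) : ℂ) = 0 →
              ∫ x, f i x ∂(μφ.bind fun l => γ j l) = 0)) :
    varDist μψ μφ = 1 := by
  obtain ⟨U, b, hUψ, hUφ⟩ := exists_linearIsometryEquiv_fixing_orthonormalBasis_inner_eq_zero
    finrank_euclideanSpace_fin hd hψ hφ hle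
  obtain ⟨γ, hγ, hindiff, hresp⟩ := h U hUψ
  choose Ωs hΩs hμψΩs hdirac using hindiff
  obtain ⟨f, hf, hf0, hsum, hprecl⟩ := hresp b
  have hΩ : MeasurableSet (⋂ j, Ωs j) := .iInter hΩs
  have hμψ : μψ (⋂ j, Ωs j) = 1 := (mem_ae_iff_prob_eq_one hΩ).1 <|
    Filter.iInter_mem.2 fun j => (mem_ae_iff_prob_eq_one (hΩs j)).2 (hμψΩs j)
  refine varDist_eq_one_of_measure_eq hΩ hμψ (measure_eq_zero_of_sum_eq_one hsum fun i => ?_)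
  have hf1 : f i ≤ 1 := fun l =>
    (Finset.single_le_sum (fun j _ => hf0 j l) (Finset.mem_univ i)).trans_eq (hsum l)
  have := hγ i
  exact measure_support_inter_eq_zero_of_integral_bind_eq_zero hΩ
    (fun l hl S hS => hdirac i l (Set.mem_iInter.1 hl i) S (hS.trans (Set.iInter_subset _ i)))
    (hf i) (hf0 i) hf1 (hprecl i i (hUφ i))

/-- Hardy's Theorem (concrete form).  Let `d ≥ 3` and let `ψ, φ` be nonorthogonal unit
vectors in `ℂ^d` with `‖⟪φ, ψ⟫‖² ≤ (d−1)/d`, represented by probability measures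
`μψ, μφ` on an ontic state space.  Assume that every family of unitaries fixing `ψ` is
represented by Markov kernels satisfying (a) ontic indifference for `ψ` and (b) the model
reproduces the quantum preclusions for measurements in orthonormal bases on the transformed
states `μφ bind γ j` (representing `U j φ`).  Then `D(μψ, μφ) = 1`: the states `ψ` and `φ`
are ontologically distinct. -/
theorem stmt14 {Λ : Type*} [MeasurableSpace Λ] (d : ℕ) (hd : 3 ≤ d)
    (ψ φ : EuclideanSpace ℂ (Fin d)) (hψ : ‖ψ‖ = 1) (hφ : ‖φ‖ = 1)
    (hne : (inner ℂ φ ψ : ℂ) ≠ 0)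
    (hle : ‖(inner ℂ φ ψ : ℂ)‖ ^ 2 ≤ ((d : ℝ) - 1) / d)
    (μψ μφ : Measure Λ) [IsProbabilityMeasure μψ] [IsProbabilityMeasure μφ]
    (h : ∀ U : Fin d → (EuclideanSpace ℂ (Fin d) ≃ₗᵢ[ℂ] EuclideanSpace ℂ (Fin d)),
      (∀ j, U j ψ = ψ) →
      ∃ γ : Fin d → Kernel Λ Λ, (∀ j, IsMarkovKernel (γ j)) ∧
        (∀ j, ∃ Ω : Set Λ, MeasurableSet Ω ∧ μψ Ω = 1 ∧
          ∀ l ∈ Ω, ∀ Ω' : Set Λ, Ω' ⊆ Ω → MeasurableSet Ω' →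
            γ j l Ω' = Measure.dirac l Ω') ∧
        (∀ b : OrthonormalBasis (Fin d) ℂ (EuclideanSpace ℂ (Fin d)),
          ∃ f : Fin d → Λ → ℝ,
            (∀ i, Measurable (f i)) ∧ (∀ i l, 0 ≤ f i l) ∧ (∀ l, ∑ i, f i l = 1) ∧
            ∀ i j, (inner ℂ (b i) (U j φ) : ℂ) = 0 →
              ∫ x, f i x ∂(μφ.bind fun l => γ j l) = 0)) :
    varDist μψ μφ = 1 :=
  stmt14_general d hd ψ φ hψ hφ hle μψ μφ h
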